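/- Let X be a smooth complete intersection of two quadrics in P^5, E a rank 2 weak Fano bundle on X with c_1(E) ∈ {0,-1}, Y = P_X(E). If c_1 = -1 then (-K_Y)^4 = 64(5 - c_2), and if c_1 = 0 then (-K_Y)^4 = 64(4 - c_2). In particular, since -K_Y is nef and big, c_2 ≤ 4 when c_1 = -1 and c_2 ≤ 3 when c_1 = 0. -/
import Mathlib

private lemma antiK_aux
    (A : Type*) [CommRing A] (deg : A →+ ℤ) (ξ H : A) (c₁ c₂ : ℤ)
    (hgroth : (4 : ℤ) • ξ ^ 2 - (4 * c₁) • (ξ * H) + c₂ • H ^ 2 = 0)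
    (hH4 : deg (H ^ 4) = 0)
    (hξH3 : deg (ξ * H ^ 3) = 4) :
    deg (((2 : ℤ) • ξ + (2 - c₁) • H) ^ 4) =
      16 * (4 * c₁ ^ 3 - 2 * c₁ * c₂) + 32 * (2 - c₁) * (4 * c₁ ^ 2 - c₂)
        + 96 * (2 - c₁) ^ 2 * c₁ + 32 * (2 - c₁) ^ 3 := by
  have hg : (ξ ^ 2 : A) * 4 = 4 * ((c₁ : ℤ) : A) * (ξ * H) - ((c₂ : ℤ) : A) * H ^ 2 := by
    simp only [zsmul_eq_mul] at hgroth
    push_cast at hgroth ⊢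
    linear_combination hgroth
  -- deg (ξ²H²)
  have k1 : (4 : ℤ) • (ξ ^ 2 * H ^ 2) = (4 * c₁) • (ξ * H ^ 3) - c₂ • (H ^ 4) := by
    simp only [zsmul_eq_mul]; push_cast; linear_combination H ^ 2 * hg
  have d1 : deg (ξ ^ 2 * H ^ 2) = 4 * c₁ := by
    have h := congrArg deg k1
    rw [map_zsmul, map_sub, map_zsmul, map_zsmul, hξH3, hH4] at h
    simp only [smul_eq_mul] at h
    omega
  -- deg (ξ³H)
  have k2 : (4 : ℤ) • (ξ ^ 3 * H) = (4 * c₁) • (ξ ^ 2 * H ^ 2) - c₂ • (ξ * H ^ 3) := by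
    simp only [zsmul_eq_mul]; push_cast; linear_combination (ξ * H) * hg
  have d2 : deg (ξ ^ 3 * H) = 4 * c₁ ^ 2 - c₂ := by
    have h := congrArg deg k2
    rw [map_zsmul, map_sub, map_zsmul, map_zsmul, d1, hξH3] at h
    simp only [smul_eq_mul] at h
    have hx : (4 : ℤ) * deg (ξ ^ 3 * H) = 4 * (4 * c₁ ^ 2 - c₂) := by linear_combination h
    exact mul_left_cancel₀ (by norm_num) hx
  -- deg (ξ⁴)
  have k3 : (4 : ℤ) • (ξ ^ 4) = (4 * c₁) • (ξ ^ 3 * H) - c₂ • (ξ ^ 2 * H ^ 2) := by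
    simp only [zsmul_eq_mul]; push_cast; linear_combination (ξ ^ 2) * hg
  have d3 : deg (ξ ^ 4) = 4 * c₁ ^ 3 - 2 * c₁ * c₂ := by
    have h := congrArg deg k3
    rw [map_zsmul, map_sub, map_zsmul, map_zsmul, d2, d1] at h
    simp only [smul_eq_mul] at h
    have hx : (4 : ℤ) * deg (ξ ^ 4) = 4 * (4 * c₁ ^ 3 - 2 * c₁ * c₂) := by linear_combination h
    exact mul_left_cancel₀ (by norm_num) hx
  -- expansion
  have kexp : ((2 : ℤ) • ξ + (2 - c₁) • H) ^ 4 =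
      (16 : ℤ) • (ξ ^ 4) + (32 * (2 - c₁)) • (ξ ^ 3 * H)
        + (24 * (2 - c₁) ^ 2) • (ξ ^ 2 * H ^ 2)
        + (8 * (2 - c₁) ^ 3) • (ξ * H ^ 3) + ((2 - c₁) ^ 4) • (H ^ 4) := by
    simp only [zsmul_eq_mul]; push_cast; ring
  rw [kexp, map_add, map_add, map_add, map_add, map_zsmul, map_zsmul, map_zsmul,
    map_zsmul, map_zsmul, d1, d2, d3, hξH3, hH4]
  simp only [smul_eq_mul]
  ring

/-- Let `X ⊂ ℙ⁵` be a smooth complete intersection of two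
quadrics, `E` a rank 2 weak Fano bundle on `X` with `c₁(E) = c₁ ∈ {0, -1}`,
and `Y = P_X(E)` with tautological class `ξ` and `H` the pullback of the
hyperplane class.  We work in the cohomology ring `A = H^*(Y,ℤ)` with degree
map `deg`.  The Grothendieck relation reads `4ξ² - 4c₁·ξH + c₂·H² = 0`
(using `π^*c₂(E) = (c₂/4)H²`), with `H⁴ = 0` and `ξ·H³ = 4`, and
`-K_Y = 2ξ + (2 - c₁)H`.  Since `E` is weak Fano, `-K_Y` is nef and big,
hence `(-K_Y)⁴ > 0`.  Then: if `c₁ = -1` then `(-K_Y)⁴ = 64(5 - c₂)` and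
`c₂ ≤ 4`; if `c₁ = 0` then `(-K_Y)⁴ = 64(4 - c₂)` and `c₂ ≤ 3`. -/
theorem antiK_fourth_power_and_c2_bounds
    (A : Type*) [CommRing A] (deg : A →+ ℤ) (ξ H : A) (c₁ c₂ : ℤ)
    (hc₁ : c₁ = 0 ∨ c₁ = -1)
    -- Grothendieck relation:
    (hgroth : (4 : ℤ) • ξ ^ 2 - (4 * c₁) • (ξ * H) + c₂ • H ^ 2 = 0)
    (hH4 : deg (H ^ 4) = 0)
    (hξH3 : deg (ξ * H ^ 3) = 4)
    -- `-K_Y = 2ξ + (2-c₁)H` is nef and big, hence `(-K_Y)⁴ > 0`: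
    (hpos : 0 < deg (((2 : ℤ) • ξ + (2 - c₁) • H) ^ 4)) :
    (c₁ = -1 →
      deg (((2 : ℤ) • ξ + (2 - c₁) • H) ^ 4) = 64 * (5 - c₂) ∧ c₂ ≤ 4) ∧
    (c₁ = 0 →
      deg (((2 : ℤ) • ξ + (2 - c₁) • H) ^ 4) = 64 * (4 - c₂) ∧ c₂ ≤ 3) := by
  have key := antiK_aux A deg ξ H c₁ c₂ hgroth hH4 hξH3
  rcases hc₁ with rfl | rfl
  · refine ⟨fun h => absurd h (by norm_num), fun _ => ⟨by rw [key]; ring, ?_⟩⟩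
    rw [key] at hpos; nlinarith [hpos]
  · refine ⟨fun _ => ⟨by rw [key]; ring, ?_⟩, fun h => absurd h (by norm_num)⟩
    rw [key] at hpos; nlinarith [hpos]
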